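/- arXiv:2305.03818 — 2 statements merged into one kernel-verified Lean document; each statement's English description precedes it below -/
import Mathlib

section
/- Let 1 ≤ ℓ ≤ k and m ≥ 1 be integers, let μ_1, …, μ_m be masses on ℝ^d, and let H_1, …, H_k be hyperplanes in ℝ^d. For g ∈ {0,1}^k let R_g = ⋂_{i=1}^k H_i^{g_i}, where H_i^0 = H_i^+ and H_i^1 = H_i^-. Then the following are equivalent: (1) any ℓ of the k hyperplanes equipartition each μ_i; (2) for every i ∈ {1,…,m} and every h ∈ {0,1}^k with 1 ≤ h_1 + ⋯ + h_k ≤ ℓ, one has Σ_{g ∈ {0,1}^k} μ_i(R_g)·(−1)^{h_1 g_1 + ⋯ + h_k g_k} = 0. -/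
open MeasureTheory RealInnerProductSpace

noncomputable section

/-- The closed half-space determined by the hyperplane `{x | ⟪a, x⟫ = b}`:
`true` corresponds to `H⁺ = {x | ⟪a, x⟫ ≥ b}`, `false` to `H⁻ = {x | ⟪a, x⟫ ≤ b}`. -/
def halfSpace {d : ℕ} (a : EuclideanSpace ℝ (Fin d)) (b : ℝ) (ε : Bool) :
    Set (EuclideanSpace ℝ (Fin d)) :=
  if ε then {x | b ≤ ⟪a, x⟫} else {x | ⟪a, x⟫ ≤ b}

/-- The region `⋂ i ∈ s, H i ^ (ε i)` determined by the hyperplanes indexed by `s`. -/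
def region {d k : ℕ} (a : Fin k → EuclideanSpace ℝ (Fin d)) (b : Fin k → ℝ)
    (s : Finset (Fin k)) (ε : Fin k → Bool) : Set (EuclideanSpace ℝ (Fin d)) :=
  ⋂ i ∈ s, halfSpace (a i) (b i) (ε i)

/-- The region `R_g = ⋂ i, H_i^{g i}`, where `g i = false` selects `H_i⁺` and
`g i = true` selects `H_i⁻` (so `0 ↔ H⁺` and `1 ↔ H⁻`). -/
def fullRegion {d k : ℕ} (a : Fin k → EuclideanSpace ℝ (Fin d)) (b : Fin k → ℝ)
    (g : Fin k → Bool) : Set (EuclideanSpace ℝ (Fin d)) :=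
  ⋂ i, halfSpace (a i) (b i) (!g i)

/-!
Write `w g = μ(R_g)` for `g ∈ {0,1}^k`. Two distinct regions `R_g` meet only inside one of the
hyperplanes, which are `μ`-null, so the measure of the region cut out by the hyperplanes in `s`
with signs `ε` is the marginal of `w` on the coordinates in `s`. Walsh–Fourier inversion on the
cube gives `2^|s| · marginal(e) = ∑_{t ⊆ s} χ_t(e) ŵ(t)` with `ŵ(∅) = μ(ℝ^d)`, so the marginal is
uniform exactly when `ŵ(t) = 0` for every nonempty `t ⊆ s`. As `s` ranges over the `ℓ`-subsets,
`t` ranges over all nonempty sets of size at most `ℓ`.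
-/

open Finset

namespace BooleanCube
variable {ι : Type*} [Fintype ι]

def walsh (t : Finset ι) (g : ι → Bool) : ℝ := ∏ i ∈ t, if g i then -1 else 1

theorem neg_one_pow_sum_eq_walsh (h g : ι → Bool) :
    (-1 : ℝ) ^ (∑ i, if h i ∧ g i then 1 else 0 : ℕ) = walsh {i | h i} g := by
  rw [walsh, ← prod_pow_eq_pow_sum, prod_filter]
  exact prod_congr rfl fun i _ => by cases h i <;> cases g i <;> simp

variable [DecidableEq ι]

def walshCoeff (w : (ι → Bool) → ℝ) (t : Finset ι) : ℝ := ∑ g, w g * walsh t g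

def marginal (w : (ι → Bool) → ℝ) (s : Finset ι) (e : ι → Bool) : ℝ :=
  ∑ g with ∀ i ∈ s, g i = e i, w g

theorem sum_prod_apply_eq_two_pow_mul (f : ι → Bool → ℝ) (s : Finset ι) :
    ∑ e : ι → Bool, ∏ i ∈ s, f i (e i)
      = 2 ^ (Fintype.card ι - #s) * ∏ i ∈ s, (f i false + f i true) := by
  have h : ∀ e : ι → Bool, ∏ i ∈ s, f i (e i) = ∏ i, if i ∈ s then f i (e i) else 1 := by
    intro e; rw [prod_ite_mem, univ_inter]
  simp_rw [h]
  rw [← Fintype.prod_sum (fun i (x : Bool) => if i ∈ s then f i x else 1)]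
  have h2 : ∀ i, (∑ x : Bool, if i ∈ s then f i x else 1)
      = if i ∈ s then f i false + f i true else 2 := by
    intro i; split_ifs <;> simp [add_comm, one_add_one_eq_two]
  simp_rw [h2]
  rw [prod_ite, prod_const, mul_comm, filter_mem_eq_inter, univ_inter, filter_not,
    filter_mem_eq_inter, univ_inter, card_sdiff_of_subset (subset_univ s), card_univ]

theorem ite_agree_eq_prod (s : Finset ι) (g e : ι → Bool) :
    (if ∀ i ∈ s, g i = e i then (1 : ℝ) else 0) = ∏ i ∈ s, if g i = e i then 1 else 0 := by
  simp [prod_boole]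

theorem sum_indicator_agree (s : Finset ι) (g : ι → Bool) :
    ∑ e : ι → Bool, (if ∀ i ∈ s, g i = e i then (1 : ℝ) else 0) = 2 ^ (Fintype.card ι - #s) := by
  simp_rw [ite_agree_eq_prod]
  rw [sum_prod_apply_eq_two_pow_mul (fun i x => if g i = x then (1 : ℝ) else 0),
    prod_eq_one fun i _ => by cases g i <;> simp, mul_one]

theorem sum_walsh_eq_zero {t : Finset ι} (ht : t.Nonempty) : ∑ e, walsh t e = 0 := by
  obtain ⟨i, hi⟩ := ht
  simp only [walsh]
  rw [sum_prod_apply_eq_two_pow_mul (fun _ x => if x then (-1 : ℝ) else 1),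
    prod_eq_zero hi (by simp), mul_zero]

theorem walshCoeff_empty (w : (ι → Bool) → ℝ) : walshCoeff w ∅ = ∑ g, w g := by
  simp [walshCoeff, walsh]

theorem two_pow_card_mul_indicator_agree (s : Finset ι) (g e : ι → Bool) :
    (2 : ℝ) ^ #s * (if ∀ i ∈ s, g i = e i then 1 else 0)
      = ∑ t ∈ s.powerset, walsh t g * walsh t e := by
  have hfactor : ∀ i, (2 : ℝ) * (if g i = e i then 1 else 0)
      = 1 + (if g i then -1 else 1) * (if e i then -1 else 1) := by
    intro i; cases g i <;> cases e i <;> norm_num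
  rw [ite_agree_eq_prod, ← prod_const, ← prod_mul_distrib]
  simp_rw [hfactor, prod_one_add, walsh, prod_mul_distrib]

theorem two_pow_card_mul_marginal (w : (ι → Bool) → ℝ) (s : Finset ι) (e : ι → Bool) :
    (2 : ℝ) ^ #s * marginal w s e = ∑ t ∈ s.powerset, walsh t e * walshCoeff w t := by
  calc (2 : ℝ) ^ #s * marginal w s e
      = ∑ g, w g * ((2 : ℝ) ^ #s * if ∀ i ∈ s, g i = e i then 1 else 0) := by
        rw [marginal, sum_filter, mul_sum]
        exact sum_congr rfl fun g _ => by split_ifs <;> ring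
    _ = ∑ g, ∑ t ∈ s.powerset, walsh t e * (w g * walsh t g) := by
        refine sum_congr rfl fun g _ => ?_
        rw [two_pow_card_mul_indicator_agree, mul_sum]
        exact sum_congr rfl fun t _ => by ring
    _ = ∑ t ∈ s.powerset, walsh t e * walshCoeff w t := by
        rw [sum_comm]
        simp_rw [walshCoeff, mul_sum]

theorem sum_walsh_mul_marginal (w : (ι → Bool) → ℝ) {s t : Finset ι} (hts : t ⊆ s) :
    ∑ e, walsh t e * marginal w s e = 2 ^ (Fintype.card ι - #s) * walshCoeff w t := by
  have hsum : ∀ g : ι → Bool,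
      ∑ e, (if ∀ i ∈ s, g i = e i then walsh t e else 0)
        = 2 ^ (Fintype.card ι - #s) * walsh t g := by
    intro g
    rw [← sum_indicator_agree s g, sum_mul]
    refine sum_congr rfl fun e _ => ?_
    split_ifs with hge
    · rw [one_mul, walsh, walsh]
      exact prod_congr rfl fun i hi => by rw [hge i (hts hi)]
    · rw [zero_mul]
  simp_rw [marginal, sum_filter, mul_sum]
  rw [sum_comm, walshCoeff, mul_sum]
  refine sum_congr rfl fun g _ => ?_
  rw [mul_left_comm, ← hsum g, mul_sum]
  exact sum_congr rfl fun e _ => by split_ifs <;> ring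

theorem marginal_eq_iff_walshCoeff_eq_zero (w : (ι → Bool) → ℝ) (s : Finset ι) :
    (∀ e, marginal w s e = (∑ g, w g) / 2 ^ #s) ↔
      ∀ t ⊆ s, t.Nonempty → walshCoeff w t = 0 := by
  constructor
  · intro H t hts ht
    have := sum_walsh_mul_marginal w hts
    simp_rw [H, ← sum_mul, sum_walsh_eq_zero ht, zero_mul] at this
    exact (mul_eq_zero.mp this.symm).resolve_left (by positivity)
  · intro H e
    have := two_pow_card_mul_marginal w s e
    rw [sum_eq_single_of_mem ∅ (empty_mem_powerset s)
      (fun t hts ht => by rw [H t (mem_powerset.mp hts) (nonempty_iff_ne_empty.mpr ht), mul_zero]),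
      walshCoeff_empty, walsh, prod_empty, one_mul] at this
    rw [← this]; field_simp

end BooleanCube

open BooleanCube

theorem Finset.forall_card_eq_forall_subset_iff {ι : Type*} [Fintype ι] {ℓ : ℕ}
    {P : Finset ι → Prop} (hℓ : ℓ ≤ Fintype.card ι) :
    (∀ s : Finset ι, #s = ℓ → ∀ t ⊆ s, P t) ↔ ∀ t : Finset ι, #t ≤ ℓ → P t := by
  refine ⟨fun H t ht => ?_, fun H s hs t hts => H t (hs ▸ card_le_card hts)⟩
  obtain ⟨s, hts, -, hs⟩ := exists_subsuperset_card_eq (subset_univ t) ht (by simpa using hℓ)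
  exact H s hs t hts

section
variable {E : Type*} [NormedAddCommGroup E] [InnerProductSpace ℝ E] [FiniteDimensional ℝ E]
  [MeasurableSpace E] [BorelSpace E]

theorem addHaar_setOf_inner_eq (μ : Measure E) [μ.IsAddHaarMeasure] {a : E} (ha : a ≠ 0)
    (b : ℝ) : μ {x | ⟪a, x⟫ = b} = 0 := by
  have hsurj : Function.Surjective (innerₗ E a) :=
    LinearMap.surjective_of_ne_zero fun h => ha (inner_self_eq_zero.mp (LinearMap.congr_fun h a))
  have hae : ∀ᵐ x ∂μ, innerₗ E a x ∈ ({b}ᶜ : Set ℝ) :=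
    (ae_comp_linearMap_mem_iff _ μ volume hsurj (measurableSet_singleton b).compl).mpr
      (by simp [ae_iff])
  simpa [ae_iff] using hae

end

section
variable {d k : ℕ} {a : Fin k → EuclideanSpace ℝ (Fin d)} {b : Fin k → ℝ}

theorem measurableSet_halfSpace (a₀ : EuclideanSpace ℝ (Fin d)) (b₀ : ℝ) (ε : Bool) :
    MeasurableSet (halfSpace a₀ b₀ ε) := by
  have hc : Measurable fun x : EuclideanSpace ℝ (Fin d) => ⟪a₀, x⟫ :=
    (innerSL ℝ a₀).continuous.measurable
  cases ε
  · exact measurableSet_le hc measurable_const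
  · exact measurableSet_le measurable_const hc

theorem measurableSet_fullRegion (g : Fin k → Bool) : MeasurableSet (fullRegion a b g) :=
  .iInter fun _ => measurableSet_halfSpace _ _ _

theorem region_eq_biUnion_fullRegion (s : Finset (Fin k)) (ε : Fin k → Bool) :
    region a b s ε =
      ⋃ g ∈ ({g | ∀ i ∈ s, g i = !ε i} : Finset (Fin k → Bool)), fullRegion a b g := by
  ext x
  simp only [region, fullRegion, Set.mem_iUnion, Set.mem_iInter, mem_filter, mem_univ, true_and]
  constructor
  · intro hx
    refine ⟨fun i => if i ∈ s then !ε i else decide (⟪a i, x⟫ < b i), fun i hi => by simp [hi],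
      fun i => ?_⟩
    by_cases hi : i ∈ s
    · simpa [hi] using hx i hi
    · by_cases hlt : ⟪a i, x⟫ < b i <;> simp [hi, hlt, halfSpace, le_of_lt, not_lt.mp]
  · rintro ⟨g, hg, hx⟩ i hi
    simpa [hg i hi] using hx i

theorem fullRegion_inter_subset {g g' : Fin k → Bool} {i : Fin k} (hi : g i ≠ g' i) :
    fullRegion a b g ∩ fullRegion a b g' ⊆ {x | ⟪a i, x⟫ = b i} := by
  rintro x ⟨hx, hx'⟩
  have h := Set.mem_iInter.mp hx i
  have h' := Set.mem_iInter.mp hx' i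
  revert hi h h'
  cases g i <;> cases g' i <;> simp [halfSpace] <;> intros <;> linarith

theorem aedisjoint_fullRegion {μ : Measure (EuclideanSpace ℝ (Fin d))} (hac : μ ≪ volume)
    (ha : ∀ i, a i ≠ 0) {g g' : Fin k → Bool} (hne : g ≠ g') :
    AEDisjoint μ (fullRegion a b g) (fullRegion a b g') := by
  obtain ⟨i, hi⟩ := Function.ne_iff.mp hne
  exact measure_mono_null (fullRegion_inter_subset hi)
    (hac (addHaar_setOf_inner_eq volume (ha i) (b i)))

theorem measure_region {μ : Measure (EuclideanSpace ℝ (Fin d))} (hac : μ ≪ volume)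
    (ha : ∀ i, a i ≠ 0) (s : Finset (Fin k)) (ε : Fin k → Bool) :
    μ (region a b s ε) = ∑ g with ∀ i ∈ s, g i = !ε i, μ (fullRegion a b g) := by
  rw [region_eq_biUnion_fullRegion, measure_biUnion_finset₀
    (fun g _ g' _ hne => aedisjoint_fullRegion hac ha hne)
    (fun g _ => (measurableSet_fullRegion g).nullMeasurableSet)]

end

section
variable {d k : ℕ} {a : Fin k → EuclideanSpace ℝ (Fin d)} {b : Fin k → ℝ}
  {μ : Measure (EuclideanSpace ℝ (Fin d))} [IsFiniteMeasure μ]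

theorem toReal_measure_region (hac : μ ≪ volume) (ha : ∀ i, a i ≠ 0) (s : Finset (Fin k))
    (ε : Fin k → Bool) :
    (μ (region a b s ε)).toReal
      = marginal (fun g => (μ (fullRegion a b g)).toReal) s (fun i => !ε i) := by
  rw [measure_region hac ha, ENNReal.toReal_sum fun g _ => measure_ne_top μ _, marginal]
  -- the two filters differ only in their `Decidable` instances
  convert rfl

theorem toReal_measure_univ_eq_sum (hac : μ ≪ volume) (ha : ∀ i, a i ≠ 0) :
    (μ Set.univ).toReal = ∑ g, (μ (fullRegion a b g)).toReal := by
  have := toReal_measure_region (b := b) hac ha ∅ (fun _ => false)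
  simpa [region, marginal] using this

theorem measure_region_eq_iff_marginal_eq (hac : μ ≪ volume) (ha : ∀ i, a i ≠ 0)
    (s : Finset (Fin k)) :
    (∀ ε, μ (region a b s ε) = μ Set.univ / 2 ^ #s) ↔
      ∀ e, marginal (fun g => (μ (fullRegion a b g)).toReal) s e
        = (∑ g, (μ (fullRegion a b g)).toReal) / 2 ^ #s := by
  have hreal : ∀ ε, μ (region a b s ε) = μ Set.univ / 2 ^ #s ↔
      (μ (region a b s ε)).toReal = (μ Set.univ).toReal / 2 ^ #s := by
    intro ε
    rw [← ENNReal.toReal_eq_toReal_iff' (measure_ne_top _ _)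
      (ENNReal.div_ne_top (measure_ne_top _ _) (by simp)), ENNReal.toReal_div,
      ENNReal.toReal_pow, ENNReal.toReal_ofNat]
  simp_rw [hreal, toReal_measure_region hac ha, toReal_measure_univ_eq_sum (b := b) hac ha]
  exact ⟨fun H e => by simpa using H fun i => !e i, fun H ε => H _⟩

end

theorem stmt_13_general (d m ℓ k : ℕ) (hℓk : ℓ ≤ k)
    (μ : Fin m → Measure (EuclideanSpace ℝ (Fin d)))
    (hfin : ∀ r, IsFiniteMeasure (μ r))
    (hac : ∀ r, μ r ≪ volume)
    (a : Fin k → EuclideanSpace ℝ (Fin d)) (b : Fin k → ℝ)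
    (ha : ∀ i, a i ≠ 0) :
    -- (1) any ℓ of the k hyperplanes equipartition each μ r
    (∀ r : Fin m, ∀ s : Finset (Fin k), s.card = ℓ → ∀ ε : Fin k → Bool,
        μ r (region a b s ε) = μ r Set.univ / 2 ^ ℓ)
    ↔
    -- (2) the corresponding Fourier coefficients vanish
    (∀ r : Fin m, ∀ h : Fin k → Bool,
        1 ≤ (∑ i, if h i then 1 else 0 : ℕ) →
        (∑ i, if h i then 1 else 0 : ℕ) ≤ ℓ →
        ∑ g : Fin k → Bool,
          (μ r (fullRegion a b g)).toReal *
            (-1 : ℝ) ^ (∑ i, if h i ∧ g i then 1 else 0 : ℕ) = 0) := by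
  classical
  set w : Fin m → (Fin k → Bool) → ℝ := fun r g => (μ r (fullRegion a b g)).toReal
  calc _ ↔ ∀ r, ∀ s : Finset (Fin k), #s = ℓ → ∀ t ⊆ s,
        t.Nonempty → walshCoeff (w r) t = 0 := by
        refine forall_congr' fun r => forall_congr' fun s => forall_congr' fun hs => ?_
        have := hfin r
        rw [← hs, measure_region_eq_iff_marginal_eq (hac r) ha,
          marginal_eq_iff_walshCoeff_eq_zero]
    _ ↔ ∀ r, ∀ t : Finset (Fin k), #t ≤ ℓ → t.Nonempty → walshCoeff (w r) t = 0 :=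
        forall_congr' fun r => forall_card_eq_forall_subset_iff (by simpa using hℓk)
    _ ↔ _ := by
        refine forall_congr' fun r => ⟨fun H h h1 hℓ => ?_, fun H t ht hne => ?_⟩
        · rw [← card_filter] at h1 hℓ
          simpa only [walshCoeff, neg_one_pow_sum_eq_walsh] using H _ hℓ (card_pos.mp h1)
        · have hfilter : ({i | decide (i ∈ t)} : Finset (Fin k)) = t := by ext; simp
          have := H (· ∈ t) (by rw [← card_filter, hfilter]; exact card_pos.mpr hne)
            (by rw [← card_filter, hfilter]; exact ht)
          simpa only [walshCoeff, neg_one_pow_sum_eq_walsh, hfilter] using this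

theorem stmt_13 (d m ℓ k : ℕ) (hℓ1 : 1 ≤ ℓ) (hℓk : ℓ ≤ k) (hm : 1 ≤ m)
    (μ : Fin m → Measure (EuclideanSpace ℝ (Fin d)))
    (hfin : ∀ r, IsFiniteMeasure (μ r))
    (hac : ∀ r, μ r ≪ volume)
    (a : Fin k → EuclideanSpace ℝ (Fin d)) (b : Fin k → ℝ)
    (ha : ∀ i, a i ≠ 0) :
    -- (1) any ℓ of the k hyperplanes equipartition each μ r
    (∀ r : Fin m, ∀ s : Finset (Fin k), s.card = ℓ → ∀ ε : Fin k → Bool,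
        μ r (region a b s ε) = μ r Set.univ / 2 ^ ℓ)
    ↔
    -- (2) the corresponding Fourier coefficients vanish
    (∀ r : Fin m, ∀ h : Fin k → Bool,
        1 ≤ (∑ i, if h i then 1 else 0 : ℕ) →
        (∑ i, if h i then 1 else 0 : ℕ) ≤ ℓ →
        ∑ g : Fin k → Bool,
          (μ r (fullRegion a b g)).toReal *
            (-1 : ℝ) ^ (∑ i, if h i ∧ g i then 1 else 0 : ℕ) = 0) :=
  stmt_13_general d m ℓ k hℓk μ hfin hac a b ha
end
end

section
/- In the polynomial ring (ZMod 2)[t_1, t_2, t_3, t_4], the polynomial p_{3,4} satisfies p_{3,4} = Σ_{σ ∈ S_4} t_{σ(1)}^5 t_{σ(2)}^4 t_{σ(3)}^3 t_{σ(4)}^2 + Σ_{σ ∈ S_4} t_{σ(1)}^7 t_{σ(2)}^4 t_{σ(3)}^2 t_{σ(4)} + Σ_{σ ∈ S_4} t_{σ(1)}^6 t_{σ(2)}^5 t_{σ(3)}^2 t_{σ(4)} + Σ_{σ ∈ S_4} t_{σ(1)}^6 t_{σ(2)}^4 t_{σ(3)}^3 t_{σ(4)}, where the sums range over all permutations σ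 of {1,2,3,4}. -/
/-!
Over any commutative ring, write `a_λ = det (x_a ^ λ_j)` for the alternant of an exponent
vector `λ`, so that `a_δ = ∏_{i<j} (x_i - x_j)` for `δ = (3,2,1,0)` and `x₀x₁x₂x₃ · a_λ = a_{λ+1}`.
With `s = x₀ + x₁ + x₂ + x₃`, the sums of three variables are the `s - x_i`, and
`∏ (s - x_i) = e₁²e₂ - e₁e₃ + e₄ = s_{31} + s_{22} + s_{211} + s_{1111}` in Schur polynomials.
The bialternant formula `a_δ s_μ = a_{μ+δ}` therefore turns `x₀x₁x₂x₃ · a_δ · ∏ (s - x_i)`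
into `a_{5432} + a_{7421} + a_{6521} + a_{6431}`. Modulo 2 the differences `x_i - x_j` become
the sums `x_i + x_j`, the left side becomes `p_{3,4}`, and the signs of the permutations in the
alternants disappear.
-/

open MvPolynomial

noncomputable section

/-- The polynomial `p_{ℓ,k} = ∏ (a₁ t₁ + ⋯ + a_k t_k)` over all `a ∈ {0,1}^k` with
`1 ≤ a₁ + ⋯ + a_k ≤ ℓ`, i.e. the product of the linear forms `∑_{i ∈ S} t_i` over all
nonempty subsets `S ⊆ {1, …, k}` with `|S| ≤ ℓ`. -/
def pPoly (k ℓ : ℕ) : MvPolynomial (Fin k) (ZMod 2) :=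
  ∏ S ∈ Finset.univ.filter (fun S : Finset (Fin k) => S.Nonempty ∧ S.card ≤ ℓ),
    ∑ i ∈ S, X i

open Matrix

section Alternant

variable {R n : Type*} [CommRing R] [Fintype n] [DecidableEq n]

def alternant (x : n → R) (e : n → ℕ) : R :=
  det (of fun a j => x a ^ e j)

theorem alternant_eq_sum_perm_of_charTwo [CharP R 2] (x : n → R) (e : n → ℕ) :
    alternant x e = ∑ σ : Equiv.Perm n, ∏ i, x (σ i) ^ e i := by
  rw [alternant, det_apply]
  refine Finset.sum_congr rfl fun σ _ => ?_
  rcases Int.units_eq_one_or (Equiv.Perm.sign σ) with h | h <;> simp [h, CharTwo.neg_eq]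

end Alternant

theorem prod_mul_vandermonde_mul_prod_triple_sums_eq_sum_alternant {R : Type*} [CommRing R]
    (x : Fin 4 → R) :
    x 0 * x 1 * x 2 * x 3 *
      ((x 0 - x 1) * (x 0 - x 2) * (x 0 - x 3) * (x 1 - x 2) * (x 1 - x 3) * (x 2 - x 3)) *
      ((x 0 + x 1 + x 2) * (x 0 + x 1 + x 3) * (x 0 + x 2 + x 3) * (x 1 + x 2 + x 3)) =
    alternant x ![5, 4, 3, 2] + alternant x ![7, 4, 2, 1] + alternant x ![6, 5, 2, 1] +
      alternant x ![6, 4, 3, 1] := by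
  simp only [alternant, det_succ_row_zero (n := 3), det_fin_three, Fin.sum_univ_four, of_apply,
    submatrix_apply, Fin.succAbove, Fin.reduceCastSucc, Fin.reduceLT, ↓reduceIte, Fin.reduceSucc,
    Fin.reduceEq, cons_val, Fin.lt_one_iff, Nat.succ_eq_add_one, Nat.reduceAdd, Nat.reduceMod,
    Fin.coe_ofNat_eq_mod, Even.neg_pow, even_two, pow_one]
  ring

theorem pPoly_four_three :
    pPoly 4 3 = X 0 * X 1 * X 2 * X 3 *
      ((X 0 + X 1) * (X 0 + X 2) * (X 0 + X 3) * (X 1 + X 2) * (X 1 + X 3) * (X 2 + X 3)) *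
      ((X 0 + X 1 + X 2) * (X 0 + X 1 + X 3) * (X 0 + X 2 + X 3) * (X 1 + X 2 + X 3)) := by
  have subsets : Finset.univ.filter (fun S : Finset (Fin 4) => S.Nonempty ∧ S.card ≤ 3) =
      {{0}, {1}, {2}, {3}, {0, 1}, {0, 2}, {0, 3}, {1, 2}, {1, 3}, {2, 3},
        {0, 1, 2}, {0, 1, 3}, {0, 2, 3}, {1, 2, 3}} := by decide
  rw [pPoly, subsets]
  simp +decide only [Finset.mem_insert, Finset.mem_singleton, Finset.prod_insert,
    Finset.prod_singleton, Finset.sum_insert, Finset.sum_singleton]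
  ac_rfl

theorem stmt_14 :
    pPoly 4 3 =
      (∑ σ : Equiv.Perm (Fin 4),
        X (σ 0) ^ 5 * X (σ 1) ^ 4 * X (σ 2) ^ 3 * X (σ 3) ^ 2) +
      (∑ σ : Equiv.Perm (Fin 4),
        X (σ 0) ^ 7 * X (σ 1) ^ 4 * X (σ 2) ^ 2 * X (σ 3)) +
      (∑ σ : Equiv.Perm (Fin 4),
        X (σ 0) ^ 6 * X (σ 1) ^ 5 * X (σ 2) ^ 2 * X (σ 3)) +
      (∑ σ : Equiv.Perm (Fin 4),
        X (σ 0) ^ 6 * X (σ 1) ^ 4 * X (σ 2) ^ 3 * X (σ 3)) := by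
  have hmod2 := prod_mul_vandermonde_mul_prod_triple_sums_eq_sum_alternant
    (X : Fin 4 → MvPolynomial (Fin 4) (ZMod 2))
  simp only [CharTwo.sub_eq_add, alternant_eq_sum_perm_of_charTwo, Fin.prod_univ_four] at hmod2
  rw [pPoly_four_three, hmod2]
  simp
end
end
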